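/- Matching conditional means for all labels characterizes the CIL constraint: under the assumption that the hypothesis classes contain the Bayes-optimal regressors h*(z) = E[T|Φ(X)=z] and g*(z,y) = E[T|Φ(X)=z, Y=y], the equality min_h max_g E[(h(Φ(X))-T)² - (g(Φ(X),Y)-T)²] = 0 holds if and only if E[T|Φ(X)] = E[T|Φ(X), Y=y] almost surely for every y in the (finite) label set. -/

import Mathlib

/-!
Conditional expectation onto a sub-σ-algebra `m` is the orthogonal projection of `T` onto the
`m`-measurable functions in `L²`, so every `m`-measurable `W` has risk
`E(W - T)² = E(W - E[T|m])² + E(E[T|m] - T)²`. Over classes containing the Bayes regressors the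
inner supremum and the outer infimum are therefore attained at `g*` and `h*`, and since `h*` is
also measurable for the finer σ-algebra of `(Φ(X), Y)`, the same identity turns the min-max value
into `E(h* - g*)²`. This vanishes iff `h* = g*` a.e., which is the fiberwise condition because `Y`
takes countably many values.
-/

open MeasureTheory ProbabilityTheory

lemma ciInf_ciSup_sub_eq {ι κ : Type*} {a : ι → ℝ} {b : κ → ℝ} {i₀ : ι} {j₀ : κ}
    (ha : ∀ i, a i₀ ≤ a i) (hb : ∀ j, b j₀ ≤ b j) :
    ⨅ i, ⨆ j, (a i - b j) = a i₀ - b j₀ := by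
  have : Nonempty ι := ⟨i₀⟩
  have : Nonempty κ := ⟨j₀⟩
  have hsup (i : ι) : ⨆ j, (a i - b j) = a i - b j₀ := by
    have : IsGreatest (Set.range fun j => a i - b j) (a i - b j₀) :=
      ⟨⟨j₀, rfl⟩, by rintro _ ⟨j, rfl⟩; exact sub_le_sub_left (hb j) _⟩
    exact this.isLUB.ciSup_eq
  have : IsLeast (Set.range fun i => a i - b j₀) (a i₀ - b j₀) :=
    ⟨⟨i₀, rfl⟩, by rintro _ ⟨i, rfl⟩; exact sub_le_sub_right (ha i) _⟩
  simpa only [hsup] using this.isGLB.ciInf_eq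

lemma integral_sq_sub_eq_zero_iff {Ω : Type*} [MeasurableSpace Ω] {μ : Measure Ω}
    {f g : Ω → ℝ} (hf : MemLp f 2 μ) (hg : MemLp g 2 μ) :
    ∫ ω, (f ω - g ω) ^ 2 ∂μ = 0 ↔ f =ᵐ[μ] g := by
  have hint : Integrable (fun ω => (f ω - g ω) ^ 2) μ := (hf.sub hg).integrable_sq
  rw [integral_eq_zero_iff_of_nonneg (fun ω => sq_nonneg _) hint]
  simp only [Filter.EventuallyEq, Pi.zero_apply, sq_eq_zero_iff, sub_eq_zero]

lemma ae_eq_iff_forall_ae_eq_on_fiber {Ω δ : Type*} [MeasurableSpace Ω] {μ : Measure Ω}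
    [Countable δ] {f g : Ω → ℝ} (Y : Ω → δ) :
    f =ᵐ[μ] g ↔ ∀ y, ∀ᵐ ω ∂μ, Y ω = y → f ω = g ω := by
  rw [← ae_all_iff]
  exact ⟨fun h => h.mono fun ω e _ _ => e, fun h => h.mono fun ω e => e (Y ω) rfl⟩

section L2Projection

variable {Ω : Type*} {m m0 : MeasurableSpace Ω} {μ : Measure Ω} [IsFiniteMeasure μ]
  {T W : Ω → ℝ}

lemma integral_mul_condExp_sub_eq_zero (hm : m ≤ m0) (hT : MemLp T 2 μ)
    (hWm : AEStronglyMeasurable[m] W μ) (hW : MemLp W 2 μ) :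
    ∫ ω, W ω * (μ[T|m] ω - T ω) ∂μ = 0 := by
  have hWT : Integrable (fun ω => W ω * T ω) μ := hW.integrable_mul hT
  have hWc : Integrable (fun ω => W ω * μ[T|m] ω) μ :=
    hW.integrable_mul (hT.condExp one_le_two)
  have pull_out : ∫ ω, W ω * μ[T|m] ω ∂μ = ∫ ω, W ω * T ω ∂μ := calc
    _ = ∫ ω, μ[W * T|m] ω ∂μ :=
      integral_congr_ae (condExp_mul_of_aestronglyMeasurable_left hWm hWT
        (hT.integrable one_le_two)).symm
    _ = _ := integral_condExp hm
  simp only [mul_sub]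
  rw [integral_sub hWc hWT, pull_out, sub_self]

lemma integral_sq_sub_eq_add_of_condExp (hm : m ≤ m0) (hT : MemLp T 2 μ)
    (hWm : AEStronglyMeasurable[m] W μ) (hW : MemLp W 2 μ) :
    ∫ ω, (W ω - T ω) ^ 2 ∂μ
      = ∫ ω, (W ω - μ[T|m] ω) ^ 2 ∂μ + ∫ ω, (μ[T|m] ω - T ω) ^ 2 ∂μ := by
  set F := μ[T|m]
  have hF : MemLp F 2 μ := hT.condExp one_le_two
  have hWF : MemLp (W - F) 2 μ := hW.sub hF
  have hFT : MemLp (F - T) 2 μ := hF.sub hT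
  have orth : ∫ ω, (W ω - F ω) * (F ω - T ω) ∂μ = 0 :=
    integral_mul_condExp_sub_eq_zero hm hT
      (hWm.sub stronglyMeasurable_condExp.aestronglyMeasurable) hWF
  have expand (ω : Ω) : (W ω - T ω) ^ 2
      = (W ω - F ω) ^ 2 + 2 * ((W ω - F ω) * (F ω - T ω)) + (F ω - T ω) ^ 2 := by ring
  have hsq₁ : Integrable (fun ω => (W ω - F ω) ^ 2) μ := hWF.integrable_sq
  have hsq₂ : Integrable (fun ω => (F ω - T ω) ^ 2) μ := hFT.integrable_sq
  have hcross : Integrable (fun ω => 2 * ((W ω - F ω) * (F ω - T ω))) μ :=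
    (hWF.integrable_mul hFT).const_mul 2
  have hsum : Integrable (fun ω => (W ω - F ω) ^ 2 + 2 * ((W ω - F ω) * (F ω - T ω))) μ :=
    hsq₁.add hcross
  simp only [expand]
  rw [integral_add hsum hsq₂, integral_add hsq₁ hcross, integral_const_mul, orth,
    mul_zero, add_zero]

lemma integral_sq_condExp_sub_le (hm : m ≤ m0) (hT : MemLp T 2 μ)
    (hWm : AEStronglyMeasurable[m] W μ) (hW : MemLp W 2 μ) :
    ∫ ω, (μ[T|m] ω - T ω) ^ 2 ∂μ ≤ ∫ ω, (W ω - T ω) ^ 2 ∂μ := by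
  rw [integral_sq_sub_eq_add_of_condExp hm hT hWm hW]
  exact le_add_of_nonneg_left (integral_nonneg fun ω => sq_nonneg _)

end L2Projection

lemma iInf_iSup_sub_integral_sq_eq {Ω ι κ : Type*} {mA mB m0 : MeasurableSpace Ω}
    {μ : Measure Ω} [IsFiniteMeasure μ] (hmB : mB ≤ m0) (hAB : mA ≤ mB)
    {T : Ω → ℝ} (hT : MemLp T 2 μ) (A : ι → Ω → ℝ) (B : κ → Ω → ℝ)
    (hA : ∀ i, AEStronglyMeasurable[mA] (A i) μ ∧ MemLp (A i) 2 μ)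
    (hB : ∀ j, AEStronglyMeasurable[mB] (B j) μ ∧ MemLp (B j) 2 μ)
    (hAstar : ∃ i, A i =ᵐ[μ] μ[T|mA]) (hBstar : ∃ j, B j =ᵐ[μ] μ[T|mB]) :
    ⨅ i, ⨆ j, (∫ ω, (A i ω - T ω) ^ 2 ∂μ - ∫ ω, (B j ω - T ω) ^ 2 ∂μ)
      = ∫ ω, (μ[T|mA] ω - μ[T|mB] ω) ^ 2 ∂μ := by
  obtain ⟨i₀, hi₀⟩ := hAstar
  obtain ⟨j₀, hj₀⟩ := hBstar
  have risk_congr {f g : Ω → ℝ} (h : f =ᵐ[μ] g) :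
      ∫ ω, (f ω - T ω) ^ 2 ∂μ = ∫ ω, (g ω - T ω) ^ 2 ∂μ :=
    integral_congr_ae (h.mono fun ω e => by simp only [e])
  rw [ciInf_ciSup_sub_eq (i₀ := i₀) (j₀ := j₀), risk_congr hi₀, risk_congr hj₀]
  · have hmeas : AEStronglyMeasurable[mB] (μ[T|mA]) μ :=
      (stronglyMeasurable_condExp.mono hAB).aestronglyMeasurable
    rw [integral_sq_sub_eq_add_of_condExp hmB hT hmeas (hT.condExp one_le_two),
      add_sub_cancel_right]
  · intro i
    rw [risk_congr hi₀]
    exact integral_sq_condExp_sub_le (hAB.trans hmB) hT (hA i).1 (hA i).2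
  · intro j
    rw [risk_congr hj₀]
    exact integral_sq_condExp_sub_le hmB hT (hB j).1 (hB j).2

theorem cil_constraint_iff_matching_conditional_means_general
    {Ω β γ δ : Type*} [MeasurableSpace Ω] [MeasurableSpace β] [MeasurableSpace γ]
    [MeasurableSpace δ] [Fintype δ]
    (μ : Measure Ω) [IsProbabilityMeasure μ]
    (X : Ω → β) (hX : Measurable X) (Φ : β → γ) (hΦ : Measurable Φ)
    (Y : Ω → δ) (hY : Measurable Y)
    (T : Ω → ℝ) (hT : MemLp T 2 μ)
    (H : Set (γ → ℝ)) (G : Set (γ × δ → ℝ))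
    (hHmeas : ∀ h ∈ H, Measurable h ∧ MemLp (fun ω => h (Φ (X ω))) 2 μ)
    (hGmeas : ∀ g ∈ G, Measurable g ∧ MemLp (fun ω => g (Φ (X ω), Y ω)) 2 μ)
    (hHstar : ∃ h ∈ H, (fun ω => h (Φ (X ω)))
      =ᵐ[μ] μ[T | MeasurableSpace.comap (fun ω => Φ (X ω)) inferInstance])
    (hGstar : ∃ g ∈ G, (fun ω => g (Φ (X ω), Y ω))
      =ᵐ[μ] μ[T | MeasurableSpace.comap (fun ω => (Φ (X ω), Y ω)) inferInstance]) :
    (⨅ h : H, ⨆ g : G,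
        (∫ ω, ((h : γ → ℝ) (Φ (X ω)) - T ω) ^ 2 ∂μ
          - ∫ ω, ((g : γ × δ → ℝ) (Φ (X ω), Y ω) - T ω) ^ 2 ∂μ)) = 0
      ↔ ∀ y : δ, ∀ᵐ ω ∂μ, Y ω = y →
          (μ[T | MeasurableSpace.comap (fun ω => Φ (X ω)) inferInstance]) ω
            = (μ[T | MeasurableSpace.comap (fun ω => (Φ (X ω), Y ω)) inferInstance]) ω := by
  set Z : Ω → γ := fun ω => Φ (X ω)
  set ZY : Ω → γ × δ := fun ω => (Z ω, Y ω)
  have hZY : Measurable ZY := (hΦ.comp hX).prodMk hY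
  have hcomap : MeasurableSpace.comap Z inferInstance ≤ MeasurableSpace.comap ZY inferInstance :=
    (measurable_fst.comp (comap_measurable ZY)).comap_le
  obtain ⟨h₀, hh₀, hh₀_eq⟩ := hHstar
  obtain ⟨g₀, hg₀, hg₀_eq⟩ := hGstar
  rw [iInf_iSup_sub_integral_sq_eq hZY.comap_le hcomap hT
      (fun h : H => fun ω => (h : γ → ℝ) (Z ω))
      (fun g : G => fun ω => (g : γ × δ → ℝ) (ZY ω))
      (fun h => ⟨((hHmeas h h.2).1.comp (comap_measurable Z)).aestronglyMeasurable,
        (hHmeas h h.2).2⟩)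
      (fun g => ⟨((hGmeas g g.2).1.comp (comap_measurable ZY)).aestronglyMeasurable,
        (hGmeas g g.2).2⟩)
      ⟨⟨h₀, hh₀⟩, hh₀_eq⟩ ⟨⟨g₀, hg₀⟩, hg₀_eq⟩,
    integral_sq_sub_eq_zero_iff (hT.condExp one_le_two) (hT.condExp one_le_two)]
  exact ae_eq_iff_forall_ae_eq_on_fiber Y

/-- Theorem 1 of the paper (CIL constraint characterization): for a featurizer `Φ`, a finite
label set, and classes `H`, `G` of measurable square-integrable regressors containing the
Bayes-optimal regressors `h*(z) = E[T|Φ(X)=z]` and `g*(z,y) = E[T|Φ(X)=z, Y=y]`, the min-max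
penalty `min_h max_g E[(h(Φ(X))-T)^2 - (g(Φ(X),Y)-T)^2]` is zero if and only if
`E[T|Φ(X)] = E[T|Φ(X), Y = y]` almost surely for every label `y`. -/
theorem cil_constraint_iff_matching_conditional_means
    {Ω β γ δ : Type*} [MeasurableSpace Ω] [MeasurableSpace β] [MeasurableSpace γ]
    [MeasurableSpace δ] [MeasurableSingletonClass δ] [Fintype δ]
    (μ : Measure Ω) [IsProbabilityMeasure μ]
    (X : Ω → β) (hX : Measurable X) (Φ : β → γ) (hΦ : Measurable Φ)
    (Y : Ω → δ) (hY : Measurable Y)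
    (T : Ω → ℝ) (hT : MemLp T 2 μ)
    (H : Set (γ → ℝ)) (G : Set (γ × δ → ℝ))
    (hHmeas : ∀ h ∈ H, Measurable h ∧ MemLp (fun ω => h (Φ (X ω))) 2 μ)
    (hGmeas : ∀ g ∈ G, Measurable g ∧ MemLp (fun ω => g (Φ (X ω), Y ω)) 2 μ)
    (hHstar : ∃ h ∈ H, (fun ω => h (Φ (X ω)))
      =ᵐ[μ] μ[T | MeasurableSpace.comap (fun ω => Φ (X ω)) inferInstance])
    (hGstar : ∃ g ∈ G, (fun ω => g (Φ (X ω), Y ω))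
      =ᵐ[μ] μ[T | MeasurableSpace.comap (fun ω => (Φ (X ω), Y ω)) inferInstance]) :
    (⨅ h : H, ⨆ g : G,
        (∫ ω, ((h : γ → ℝ) (Φ (X ω)) - T ω) ^ 2 ∂μ
          - ∫ ω, ((g : γ × δ → ℝ) (Φ (X ω), Y ω) - T ω) ^ 2 ∂μ)) = 0
      ↔ ∀ y : δ, ∀ᵐ ω ∂μ, Y ω = y →
          (μ[T | MeasurableSpace.comap (fun ω => Φ (X ω)) inferInstance]) ω
            = (μ[T | MeasurableSpace.comap (fun ω => (Φ (X ω), Y ω)) inferInstance]) ω :=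
  cil_constraint_iff_matching_conditional_means_general μ X hX Φ hΦ Y hY T hT H G hHmeas hGmeas
    hHstar hGstar
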